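/- Fix the spatial mesh size h and a final time T > 0. Suppose β > 0 satisfies f(β) ≤ 0 ≤ f(−β), κ ≥ max_{|ξ|≤β} |f'(ξ)|, and ‖u_init‖_∞ ≤ β. Then there exist constants G_* > 0 and G^* > 0, independent of the time step τ, such that for every τ > 0 and every integer n with 0 ≤ n ≤ ⌊T/τ⌋, the GSAV-EI1 iterates satisfy G_* ≤ g(uⁿ, sⁿ) ≤ G^*. -/

import Mathlib

open scoped BigOperators
noncomputable section

/-- Grid functions on the `M × M` periodic mesh, identified with vectors in `ℝ^{M²}`.
The sup norm of this Pi type is the discrete `L^∞` (maximum) norm. -/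
abbrev GridFun (M : ℕ) : Type := Fin M × Fin M → ℝ

/-- Discrete inner product `⟨v,w⟩ = h² Σ_{i,j} v_{ij} w_{ij}`. -/
def gridInner (M : ℕ) (h : ℝ) (v w : GridFun M) : ℝ :=
  h ^ 2 * ∑ p : Fin M × Fin M, v p * w p

/-- Discrete `L²` norm `‖v‖ = ⟨v,v⟩^{1/2}`. -/
def gridNorm (M : ℕ) (h : ℝ) (v : GridFun M) : ℝ :=
  Real.sqrt (gridInner M h v v)

/-- The discrete Laplacian as a linear map (periodic indexing via `Fin M` arithmetic). -/
def dLapL (M : ℕ) [NeZero M] (h : ℝ) : GridFun M →ₗ[ℝ] GridFun M where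
  toFun v := fun p =>
    (v (p.1 + 1, p.2) + v (p.1 - 1, p.2) + v (p.1, p.2 + 1) + v (p.1, p.2 - 1) - 4 * v p) / h ^ 2
  map_add' v w := by funext p; simp only [Pi.add_apply]; ring
  map_smul' c v := by funext p; simp only [Pi.smul_apply, smul_eq_mul, RingHom.id_apply]; ring

/-- The discrete Laplacian `Δ_h` as a continuous linear map on `ℝ^{M²}`. -/
def dLap (M : ℕ) [NeZero M] (h : ℝ) : GridFun M →L[ℝ] GridFun M :=
  LinearMap.toContinuousLinearMap (dLapL M h)

/-- Bulk energy `E_{1h}(v) = h² Σ F(v_{ij})`. -/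
def E1h (M : ℕ) (h : ℝ) (F : ℝ → ℝ) (v : GridFun M) : ℝ :=
  h ^ 2 * ∑ p : Fin M × Fin M, F (v p)

/-- Discrete gradient energy `(ε²/2) ‖∇_h v‖²`. -/
def gradE (M : ℕ) [NeZero M] (h ε : ℝ) (v : GridFun M) : ℝ :=
  ε ^ 2 / 2 * (h ^ 2 * ∑ p : Fin M × Fin M,
    (((v (p.1 + 1, p.2) - v p) / h) ^ 2 + ((v (p.1, p.2 + 1) - v p) / h) ^ 2))

/-- Modified energy `𝓔_h(v, r) = (ε²/2)‖∇_h v‖² + r`. -/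
def modE (M : ℕ) [NeZero M] (h ε : ℝ) (v : GridFun M) (r : ℝ) : ℝ :=
  gradE M h ε v + r

/-- Discrete energy `E_h(v) = (ε²/2)‖∇_h v‖² + E_{1h}(v)`. -/
def Eh (M : ℕ) [NeZero M] (h ε : ℝ) (F : ℝ → ℝ) (v : GridFun M) : ℝ :=
  gradE M h ε v + E1h M h F v

/-- `g(v, r) = σ(r) / σ(E_{1h}(v))`. -/
def gFun (M : ℕ) (h : ℝ) (F σ : ℝ → ℝ) (v : GridFun M) (r : ℝ) : ℝ :=
  σ r / σ (E1h M h F v)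

/-- The linear operator `L_κ = κ g₀ I − ε² Δ_h`. -/
def Lkappa (M : ℕ) [NeZero M] (h ε κ g0 : ℝ) : GridFun M →L[ℝ] GridFun M :=
  (κ * g0) • (1 : GridFun M →L[ℝ] GridFun M) - ε ^ 2 • dLap M h

/-- The nonlinear operator `N_κ(v, r) = g(v,r) f(v) + κ g₀ v` (with `f` applied entrywise). -/
def Nkappa (M : ℕ) (h κ g0 : ℝ) (f F σ : ℝ → ℝ) (v : GridFun M) (r : ℝ) : GridFun M :=
  fun p => gFun M h F σ v r * f (v p) + κ * g0 * v p

/-- One step of the GSAV-EI1 scheme. -/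
def EI1step (M : ℕ) [NeZero M] (h ε κ τ : ℝ) (f F σ : ℝ → ℝ) (us : GridFun M × ℝ) :
    GridFun M × ℝ :=
  let g0 := gFun M h F σ us.1 us.2
  let Lk := Lkappa M h ε κ g0
  let u1 := (NormedSpace.exp (-(τ • Lk))) us.1
    + (∫ θ in (0:ℝ)..τ, NormedSpace.exp (-((τ - θ) • Lk))) (Nkappa M h κ g0 f F σ us.1 us.2)
  (u1, us.2 - g0 * gridInner M h (fun p => f (us.1 p)) (u1 - us.1))

/-- The GSAV-EI1 iterates `(uⁿ, sⁿ)`. -/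
def EI1 (M : ℕ) [NeZero M] (h ε κ τ : ℝ) (f F σ : ℝ → ℝ) (uinit : GridFun M) :
    ℕ → GridFun M × ℝ
  | 0 => (uinit, E1h M h F uinit)
  | n + 1 => EI1step M h ε κ τ f F σ (EI1 M h ε κ τ f F σ uinit n)

/-- The midpoint values `(ũ^{n+1/2}, s̃^{n+1/2})` of the GSAV-EI2 scheme, as a function of
`(uⁿ, sⁿ)`; the prediction `(ũ^{n+1}, s̃^{n+1})` is a GSAV-EI1 step. -/
def EI2half (M : ℕ) [NeZero M] (h ε κ τ : ℝ) (f F σ : ℝ → ℝ) (us : GridFun M × ℝ) :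
    GridFun M × ℝ :=
  let t := EI1step M h ε κ τ f F σ us
  ((1 / 2 : ℝ) • (us.1 + t.1), (us.2 + t.2) / 2)

/-- One step of the GSAV-EI2 scheme. -/
def EI2step (M : ℕ) [NeZero M] (h ε κ τ : ℝ) (f F σ : ℝ → ℝ) (us : GridFun M × ℝ) :
    GridFun M × ℝ :=
  let t := EI1step M h ε κ τ f F σ us
  let m := EI2half M h ε κ τ f F σ us
  let gh := gFun M h F σ m.1 m.2
  let Lk := Lkappa M h ε κ gh
  let u1 := (NormedSpace.exp (-(τ • Lk))) us.1
    + (∫ θ in (0:ℝ)..τ, NormedSpace.exp (-((τ - θ) • Lk))) (Nkappa M h κ gh f F σ m.1 m.2)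
  (u1, us.2 - gh * gridInner M h (fun p => f (m.1 p)) (u1 - us.1)
        + κ / 2 * gh * gridInner M h (u1 - t.1) (u1 - us.1))

/-- The GSAV-EI2 iterates `(uⁿ, sⁿ)`. -/
def EI2 (M : ℕ) [NeZero M] (h ε κ τ : ℝ) (f F σ : ℝ → ℝ) (uinit : GridFun M) :
    ℕ → GridFun M × ℝ
  | 0 => (uinit, E1h M h F uinit)
  | n + 1 => EI2step M h ε κ τ f F σ (EI2 M h ε κ τ f F σ uinit n)

/-- One step of the stabilized generalized-SAV scheme (GSAV-EI1 with `e^{−τL}` replaced by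
`(I + τL)^{−1}`). -/
def SAV1step (M : ℕ) [NeZero M] (h ε κ τ : ℝ) (f F σ : ℝ → ℝ) (us : GridFun M × ℝ) :
    GridFun M × ℝ :=
  let g0 := gFun M h F σ us.1 us.2
  let Lk := Lkappa M h ε κ g0
  let u1 := (Ring.inverse ((1 : GridFun M →L[ℝ] GridFun M) + τ • Lk))
      (us.1 + τ • Nkappa M h κ g0 f F σ us.1 us.2)
  (u1, us.2 - g0 * gridInner M h (fun p => f (us.1 p)) (u1 - us.1))

/-- The stabilized generalized-SAV iterates `(uⁿ, sⁿ)`. -/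
def SAV1 (M : ℕ) [NeZero M] (h ε κ τ : ℝ) (f F σ : ℝ → ℝ) (uinit : GridFun M) :
    ℕ → GridFun M × ℝ
  | 0 => (uinit, E1h M h F uinit)
  | n + 1 => SAV1step M h ε κ τ f F σ (SAV1 M h ε κ τ f F σ uinit n)

/-!
Two invariants hold for every step size `τ`. First, a discrete maximum principle:
`e^{-sL_κ}` is `e^{-sκg}` times the heat semigroup `e^{sε²Δ_h}`, which preserves nonnegativity
and constants, and the stabilized nonlinearity `g (f(ξ) + κξ)` maps `[-β, β]` into
`[-κgβ, κgβ]`; so `‖uⁿ‖_∞ ≤ β`. Second, energy dissipation: with `w = g f(uⁿ) + ε²Δ_h uⁿ` and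
`δ = u^{n+1} - uⁿ = τφ₁(-τL_κ) w`, the modified energy changes by
`-(h²/2)(⟨δ, w⟩ + ⟨e^{-τL_κ} δ, w⟩ + κg⟨δ, δ⟩) ≤ 0`, because `τφ₁(-τL_κ)` and `e^{-τL_κ}` are
symmetric with nonnegative quadratic forms; so `sⁿ ≤ E_h(u⁰)`.

Then `E_{1h}(uⁿ)` ranges over the compact image of the ball of radius `β`, which bounds
`g(uⁿ, sⁿ) = σ(sⁿ) / σ(E_{1h}(uⁿ))` from above. Both invariants together give
`|s^{n+1} - sⁿ| ≤ Cτ` with `C` independent of `τ`, hence `sⁿ ≥ s⁰ - CT` for `nτ ≤ T`, and the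
monotonicity of `σ` turns this into the lower bound.
-/
open NormedSpace intervalIntegral

section BanachAlgebra

variable {𝔸 : Type*} [NormedRing 𝔸] [NormedAlgebra ℝ 𝔸] [CompleteSpace 𝔸]

theorem exp_smul_one_add (c : ℝ) (a : 𝔸) : exp (c • (1 : 𝔸) + a) = Real.exp c • exp a := by
  let +nondep : NormedAlgebra ℚ 𝔸 := .restrictScalars ℚ ℝ 𝔸
  rw [exp_add_of_commute ((Commute.one_left a).smul_left c), ← Algebra.algebraMap_eq_smul_one,
    ← algebraMap_exp_comm, Real.exp_eq_exp_ℝ, Algebra.smul_def]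

theorem exp_smul_mul_exp_smul (s t : ℝ) (a : 𝔸) :
    exp (s • a) * exp (t • a) = exp ((s + t) • a) := by
  let +nondep : NormedAlgebra ℚ 𝔸 := .restrictScalars ℚ ℝ 𝔸
  rw [add_smul, exp_add_of_commute (((Commute.refl a).smul_left s).smul_right t)]

theorem hasDerivAt_exp_neg_sub_smul (τ θ : ℝ) (a : 𝔸) :
    HasDerivAt (fun θ : ℝ => exp (-((τ - θ) • a))) (exp (-((τ - θ) • a)) * a) θ := by
  have hsmul : ∀ θ : ℝ, -((τ - θ) • a) = (θ - τ) • a := fun θ => by rw [← neg_smul, neg_sub]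
  simp only [hsmul]
  exact (hasDerivAt_exp_smul_const a (θ - τ)).comp_sub_const θ τ

theorem continuous_exp_neg_sub_smul (τ : ℝ) (a : 𝔸) :
    Continuous fun θ : ℝ => exp (-((τ - θ) • a)) :=
  continuous_iff_continuousAt.2 fun θ => (hasDerivAt_exp_neg_sub_smul τ θ a).continuousAt

/-- `τ φ₁(-τ a)`, where `φ₁(z) = (e^z - 1) / z` is the first φ-function of exponential
integrators. -/
noncomputable def phi1Op (τ : ℝ) (a : 𝔸) : 𝔸 := ∫ θ in (0 : ℝ)..τ, exp (-((τ - θ) • a))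

theorem phi1Op_mul_self (τ : ℝ) (a : 𝔸) : phi1Op τ a * a = 1 - exp (-(τ • a)) := by
  have hcont := continuous_exp_neg_sub_smul τ a
  unfold phi1Op
  change (ContinuousLinearMap.mul ℝ 𝔸).flip a _ = _
  rw [← ContinuousLinearMap.intervalIntegral_comp_comm _ (hcont.intervalIntegrable 0 τ)]
  simp only [ContinuousLinearMap.flip_apply, ContinuousLinearMap.mul_apply']
  rw [integral_eq_sub_of_hasDerivAt (fun θ _ => hasDerivAt_exp_neg_sub_smul τ θ a)
    ((hcont.mul continuous_const).intervalIntegrable 0 τ)]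
  simp

end BanachAlgebra

section BanachSpace

variable {E : Type*} [NormedAddCommGroup E] [NormedSpace ℝ E] [CompleteSpace E]

theorem exp_apply_of_apply_eq_smul {T : E →L[ℝ] E} {c : ℝ} {v : E} (hv : T v = c • v) :
    exp T v = Real.exp c • v := by
  have hpow : ∀ n : ℕ, (T ^ n) v = c ^ n • v := by
    intro n
    induction n with
    | zero => simp
    | succ n ih =>
      calc (T ^ (n + 1)) v = T ((T ^ n) v) := by rw [pow_succ']; rfl
        _ = c ^ (n + 1) • v := by rw [ih, map_smul, hv, smul_smul, pow_succ]
  have hT := (ContinuousLinearMap.apply ℝ E v).map_tsum (expSeries_summable' (𝕂 := ℝ) T)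
  rw [exp_eq_tsum ℝ, Real.exp_eq_exp_ℝ, exp_eq_tsum ℝ]
  simp only [ContinuousLinearMap.apply_apply, smul_apply, hpow, smul_smul,
    smul_eq_mul] at hT ⊢
  rw [hT]
  exact (expSeries_summable' (𝕂 := ℝ) c).tsum_smul_const v

theorem integral_exp_neg_sub_mul {c : ℝ} (hc : c ≠ 0) (τ : ℝ) :
    ∫ θ in (0 : ℝ)..τ, Real.exp (-((τ - θ) * c)) = (1 - Real.exp (-(τ * c))) / c := by
  have hderiv : ∀ θ : ℝ, HasDerivAt (fun θ => Real.exp (-((τ - θ) * c)) / c)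
      (Real.exp (-((τ - θ) * c))) θ := fun θ => by
    have hlin : HasDerivAt (fun θ => -((τ - θ) * c)) c θ := by
      simpa [neg_mul_eq_neg_mul, neg_sub] using ((hasDerivAt_id θ).sub_const τ).mul_const c
    simpa [mul_div_cancel_right₀ _ hc] using hlin.exp.div_const c
  rw [integral_eq_sub_of_hasDerivAt (fun θ _ => hderiv θ)
    ((by fun_prop : Continuous fun θ => Real.exp (-((τ - θ) * c))).intervalIntegrable 0 τ)]
  simp [sub_div]

theorem norm_phi1Op_apply_le {L : E →L[ℝ] E} {c τ : ℝ} (hc : 0 < c) (hτ : 0 ≤ τ)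
    (hL : ∀ s, 0 ≤ s → ∀ v, ‖exp (-(s • L)) v‖ ≤ Real.exp (-(s * c)) * ‖v‖) (v : E) :
    ‖phi1Op τ L v‖ ≤ (1 - Real.exp (-(τ * c))) / c * ‖v‖ := by
  have hcont : Continuous fun θ : ℝ => exp (-((τ - θ) • L)) := continuous_exp_neg_sub_smul τ L
  rw [phi1Op, ContinuousLinearMap.intervalIntegral_apply (hcont.intervalIntegrable 0 τ),
    ← integral_exp_neg_sub_mul hc.ne', ← intervalIntegral.integral_mul_const]
  refine (norm_integral_le_integral_norm hτ).trans (integral_mono_on hτ ?_ ?_ fun θ hθ => ?_)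
  · exact ((hcont.clm_apply continuous_const).norm).intervalIntegrable 0 τ
  · exact (by fun_prop : Continuous fun θ => Real.exp (-((τ - θ) * c)) * ‖v‖).intervalIntegrable 0 τ
  · exact hL (τ - θ) (sub_nonneg.2 hθ.2) v

theorem phi1Op_apply_apply_self (τ : ℝ) (L : E →L[ℝ] E) (v : E) :
    phi1Op τ L (L v) = v - exp (-(τ • L)) v := by
  rw [← mul_apply_eq_comp, phi1Op_mul_self]
  rfl

end BanachSpace

section FiniteIndex

variable {ι : Type*}

def PreservesNonneg (T : (ι → ℝ) →L[ℝ] (ι → ℝ)) : Prop := ∀ v, 0 ≤ v → 0 ≤ T v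

namespace PreservesNonneg

variable {T S : (ι → ℝ) →L[ℝ] (ι → ℝ)}

theorem one : PreservesNonneg (1 : (ι → ℝ) →L[ℝ] (ι → ℝ)) := fun _ hv => hv

theorem mul (hT : PreservesNonneg T) (hS : PreservesNonneg S) : PreservesNonneg (T * S) :=
  fun v hv => hT _ (hS v hv)

theorem pow (hT : PreservesNonneg T) : ∀ n : ℕ, PreservesNonneg (T ^ n)
  | 0 => one
  | n + 1 => by rw [pow_succ]; exact (hT.pow n).mul hT

theorem smul (hT : PreservesNonneg T) {c : ℝ} (hc : 0 ≤ c) : PreservesNonneg (c • T) :=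
  fun v hv => smul_nonneg hc (hT v hv)

end PreservesNonneg

variable [Fintype ι]

def IsDotSymm (T : (ι → ℝ) →L[ℝ] (ι → ℝ)) : Prop := ∀ v w, T v ⬝ᵥ w = v ⬝ᵥ T w

noncomputable def dotApplyCLM (v w : ι → ℝ) : ((ι → ℝ) →L[ℝ] (ι → ℝ)) →L[ℝ] ℝ :=
  (LinearMap.toContinuousLinearMap ((dotProductBilin ℝ ℝ).flip w)).comp
    (ContinuousLinearMap.apply ℝ _ v)

@[simp] theorem dotApplyCLM_apply (v w : ι → ℝ) (T : (ι → ℝ) →L[ℝ] (ι → ℝ)) :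
    dotApplyCLM v w T = T v ⬝ᵥ w := rfl

theorem exp_apply_dotProduct (T : (ι → ℝ) →L[ℝ] (ι → ℝ)) (v w : ι → ℝ) :
    NormedSpace.exp T v ⬝ᵥ w = ∑' n : ℕ, (n.factorial : ℝ)⁻¹ * ((T ^ n) v ⬝ᵥ w) := by
  have := (dotApplyCLM v w).map_tsum (NormedSpace.expSeries_summable' (𝕂 := ℝ) T)
  rw [NormedSpace.exp_eq_tsum ℝ]
  simpa using this

theorem intervalIntegral_apply_dotProduct {P : ℝ → (ι → ℝ) →L[ℝ] (ι → ℝ)} (hP : Continuous P)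
    (a b : ℝ) (v w : ι → ℝ) :
    (∫ θ in a..b, P θ) v ⬝ᵥ w = ∫ θ in a..b, P θ v ⬝ᵥ w :=
  ((dotApplyCLM v w).intervalIntegral_comp_comm (hP.intervalIntegrable a b)).symm

theorem abs_apply_le_norm (v : ι → ℝ) (i : ι) : |v i| ≤ ‖v‖ := by
  simpa using norm_le_pi_norm v i

theorem abs_dotProduct_le (v w : ι → ℝ) : |v ⬝ᵥ w| ≤ Fintype.card ι * (‖v‖ * ‖w‖) := by
  calc |v ⬝ᵥ w| ≤ ∑ i, |v i * w i| := Finset.abs_sum_le_sum_abs _ _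
    _ ≤ ∑ _i : ι, ‖v‖ * ‖w‖ := Finset.sum_le_sum fun i _ => by
        rw [abs_mul]
        exact mul_le_mul (abs_apply_le_norm v i) (abs_apply_le_norm w i) (abs_nonneg _)
          (norm_nonneg _)
    _ = Fintype.card ι * (‖v‖ * ‖w‖) := by simp

theorem exp_apply_apply (T : (ι → ℝ) →L[ℝ] (ι → ℝ)) (v : ι → ℝ) (i : ι) :
    NormedSpace.exp T v i = ∑' n : ℕ, (n.factorial : ℝ)⁻¹ * (T ^ n) v i := by
  have := ((ContinuousLinearMap.proj i).comp (ContinuousLinearMap.apply ℝ _ v)).map_tsum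
    (NormedSpace.expSeries_summable' (𝕂 := ℝ) T)
  rw [NormedSpace.exp_eq_tsum ℝ]
  simpa using this

namespace PreservesNonneg

variable {T : (ι → ℝ) →L[ℝ] (ι → ℝ)}

theorem exp (hT : PreservesNonneg T) : PreservesNonneg (NormedSpace.exp T) := fun v hv i => by
  rw [Pi.zero_apply, exp_apply_apply]
  exact tsum_nonneg fun n => mul_nonneg (by positivity) (hT.pow n v hv i)

theorem exp_of_add_smul_one {c : ℝ} (hT : PreservesNonneg (T + c • 1)) :
    PreservesNonneg (NormedSpace.exp T) := by
  have hsplit : T = (-c) • (1 : (ι → ℝ) →L[ℝ] (ι → ℝ)) + (T + c • 1) := by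
    rw [add_left_comm, ← add_smul, neg_add_cancel, zero_smul, add_zero]
  rw [hsplit, exp_smul_one_add]
  exact hT.exp.smul (Real.exp_pos _).le

theorem norm_apply_le (hT : PreservesNonneg T) (h1 : T 1 = 1) (v : ι → ℝ) : ‖T v‖ ≤ ‖v‖ := by
  have hv := abs_apply_le_norm v
  have hupper : T v ≤ ‖v‖ • 1 := by
    have := hT (‖v‖ • 1 - v) fun i => by simpa using (abs_le.1 (hv i)).2
    rwa [map_sub, map_smul, h1, sub_nonneg] at this
  have hlower : -(‖v‖ • 1) ≤ T v := by
    have := hT (‖v‖ • 1 + v) fun i => by simpa [neg_le_iff_add_nonneg'] using (abs_le.1 (hv i)).1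
    rwa [map_add, map_smul, h1, ← neg_le_iff_add_nonneg'] at this
  refine pi_norm_le_iff_of_nonneg (norm_nonneg v) |>.2 fun i => ?_
  rw [Real.norm_eq_abs, abs_le]
  exact ⟨by simpa using hlower i, by simpa using hupper i⟩

end PreservesNonneg

namespace IsDotSymm

variable {T S L : (ι → ℝ) →L[ℝ] (ι → ℝ)}

theorem one : IsDotSymm (1 : (ι → ℝ) →L[ℝ] (ι → ℝ)) := fun _ _ => rfl

theorem smul (hT : IsDotSymm T) (c : ℝ) : IsDotSymm (c • T) := fun v w => by
  simp only [smul_apply, smul_dotProduct, dotProduct_smul, hT v w]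

theorem sub (hT : IsDotSymm T) (hS : IsDotSymm S) : IsDotSymm (T - S) := fun v w => by
  simp only [sub_apply, sub_dotProduct, dotProduct_sub, hT v w, hS v w]

theorem pow (hT : IsDotSymm T) : ∀ n : ℕ, IsDotSymm (T ^ n)
  | 0 => one
  | n + 1 => fun v w =>
    calc (T ^ (n + 1)) v ⬝ᵥ w = (T ^ n) (T v) ⬝ᵥ w := by rw [pow_succ]; rfl
      _ = v ⬝ᵥ T ((T ^ n) w) := by rw [hT.pow n, hT]
      _ = v ⬝ᵥ (T ^ (n + 1)) w := by rw [pow_succ']; rfl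

theorem exp (hT : IsDotSymm T) : IsDotSymm (NormedSpace.exp T) := fun v w => by
  rw [dotProduct_comm v, exp_apply_dotProduct, exp_apply_dotProduct]
  simp only [hT.pow _ v w, dotProduct_comm v]

theorem dotProduct_exp_apply_self_nonneg (hT : IsDotSymm T) (v : ι → ℝ) :
    0 ≤ NormedSpace.exp T v ⬝ᵥ v := by
  have hhalf : NormedSpace.exp T =
      NormedSpace.exp ((1 / 2 : ℝ) • T) * NormedSpace.exp ((1 / 2 : ℝ) • T) := by
    rw [exp_smul_mul_exp_smul (1 / 2 : ℝ) (1 / 2) T]; norm_num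
  rw [hhalf, mul_apply_eq_comp, (hT.smul _).exp]
  exact Fintype.sum_nonneg fun _ => mul_self_nonneg _

theorem intervalIntegral {P : ℝ → (ι → ℝ) →L[ℝ] (ι → ℝ)} (hP : Continuous P)
    (hsymm : ∀ θ, IsDotSymm (P θ)) (a b : ℝ) : IsDotSymm (∫ θ in a..b, P θ) := fun v w => by
  rw [dotProduct_comm v, intervalIntegral_apply_dotProduct hP, intervalIntegral_apply_dotProduct hP]
  simp only [hsymm _ v w, dotProduct_comm v]

theorem phi1Op (hL : IsDotSymm L) (τ : ℝ) : IsDotSymm (_root_.phi1Op τ L) :=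
  IsDotSymm.intervalIntegral (continuous_exp_neg_sub_smul τ L)
    (fun θ => by rw [← neg_smul]; exact (hL.smul _).exp) 0 τ

theorem dotProduct_phi1Op_exp_apply_self_nonneg (hL : IsDotSymm L) {τ : ℝ} (hτ : 0 ≤ τ) (t : ℝ)
    (v : ι → ℝ) : 0 ≤ _root_.phi1Op τ L (NormedSpace.exp (-(t • L)) v) ⬝ᵥ v := by
  rw [_root_.phi1Op, intervalIntegral_apply_dotProduct (continuous_exp_neg_sub_smul τ L)]
  refine intervalIntegral.integral_nonneg hτ fun θ _ => ?_
  rw [← mul_apply_eq_comp, ← neg_smul, ← neg_smul t L, exp_smul_mul_exp_smul (-(τ - θ)) (-t) L]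
  exact (hL.smul _).dotProduct_exp_apply_self_nonneg v

end IsDotSymm

end FiniteIndex

theorem abs_add_mul_le_of_abs_deriv_le {f : ℝ → ℝ} {κ β : ℝ} (hf : Differentiable ℝ f)
    (hfβ : f β ≤ 0) (hfβ' : 0 ≤ f (-β)) (hκf : ∀ ξ ∈ Set.Icc (-β) β, |deriv f ξ| ≤ κ) :
    ∀ ξ ∈ Set.Icc (-β) β, |f ξ + κ * ξ| ≤ κ * β := by
  have hderiv : ∀ x, HasDerivAt (fun ξ => f ξ + κ * ξ) (deriv f x + κ) x := fun x => by
    simpa using (hf x).hasDerivAt.fun_add ((hasDerivAt_id' x).const_mul κ)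
  have hmono : MonotoneOn (fun ξ => f ξ + κ * ξ) (Set.Icc (-β) β) := by
    refine monotoneOn_of_deriv_nonneg (convex_Icc _ _)
      (HasDerivAt.continuousOn fun x _ => hderiv x)
      (fun x _ => (hderiv x).differentiableAt.differentiableWithinAt) fun x hx => ?_
    rw [interior_Icc] at hx
    rw [(hderiv x).deriv]
    linarith [(abs_le.1 (hκf x (Set.Ioo_subset_Icc_self hx))).1]
  intro ξ hξ
  have hupper := hmono hξ ⟨hξ.1.trans hξ.2, le_rfl⟩ hξ.2
  have hlower := hmono ⟨le_rfl, hξ.1.trans hξ.2⟩ hξ hξ.1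
  simp only at hupper hlower
  rw [abs_le]
  constructor <;> linarith

theorem exists_pos_bounds_on_closedBall {E : Type*} [NormedAddCommGroup E] [ProperSpace E]
    {φ : E → ℝ} (hφ : Continuous φ) (hpos : ∀ x, 0 < φ x) {β : ℝ} (hβ : 0 ≤ β) :
    ∃ a b, 0 < a ∧ ∀ x, ‖x‖ ≤ β → a ≤ φ x ∧ φ x ≤ b := by
  have hne : (Metric.closedBall (0 : E) β).Nonempty := ⟨0, Metric.mem_closedBall_self hβ⟩
  obtain ⟨x₀, -, hx₀⟩ := (isCompact_closedBall (0 : E) β).exists_isMinOn hne hφ.continuousOn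
  obtain ⟨x₁, -, hx₁⟩ := (isCompact_closedBall (0 : E) β).exists_isMaxOn hne hφ.continuousOn
  refine ⟨φ x₀, φ x₁, hpos x₀, fun x hx => ?_⟩
  have hmem : x ∈ Metric.closedBall (0 : E) β := by simpa using hx
  exact ⟨hx₀ hmem, hx₁ hmem⟩

section Laplacian

variable {M : ℕ} [NeZero M] {h : ℝ}

theorem dLap_apply (v : GridFun M) (p : Fin M × Fin M) :
    dLap M h v p = (v (p.1 + 1, p.2) + v (p.1 - 1, p.2) + v (p.1, p.2 + 1) + v (p.1, p.2 - 1)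
      - 4 * v p) / h ^ 2 :=
  rfl

def shiftFst : Fin M × Fin M ≃ Fin M × Fin M := (Equiv.addRight 1).prodCongr (Equiv.refl _)

def shiftSnd : Fin M × Fin M ≃ Fin M × Fin M := (Equiv.refl _).prodCongr (Equiv.addRight 1)

theorem dLap_eq (v : GridFun M) :
    dLap M h v = (h ^ 2)⁻¹ • (v ∘ shiftFst + v ∘ shiftFst.symm + v ∘ shiftSnd + v ∘ shiftSnd.symm
      - (4 : ℝ) • v) := by
  funext p
  simp [dLap_apply, shiftFst, shiftSnd, Prod.map, sub_eq_add_neg, div_eq_inv_mul]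

theorem dLap_isDotSymm : IsDotSymm (dLap M h) := fun v w => by
  simp only [dLap_eq, smul_dotProduct, dotProduct_smul, add_dotProduct, dotProduct_add,
    sub_dotProduct, dotProduct_sub, comp_equiv_symm_dotProduct]
  rw [← dotProduct_comp_equiv_symm v w shiftFst, ← dotProduct_comp_equiv_symm v w shiftSnd]
  ring

theorem gradE_eq_neg_dLap_dotProduct (hh : h ≠ 0) (ε : ℝ) (v : GridFun M) :
    gradE M h ε v = -(ε ^ 2 / 2 * (h ^ 2 * (dLap M h v ⬝ᵥ v))) := by
  have hsum : h ^ 2 * ∑ p : Fin M × Fin M,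
      (((v (p.1 + 1, p.2) - v p) / h) ^ 2 + ((v (p.1, p.2 + 1) - v p) / h) ^ 2) =
      (v ∘ shiftFst - v) ⬝ᵥ (v ∘ shiftFst - v) + (v ∘ shiftSnd - v) ⬝ᵥ (v ∘ shiftSnd - v) := by
    simp only [dotProduct, ← Finset.sum_add_distrib, Finset.mul_sum]
    refine Finset.sum_congr rfl fun p _ => ?_
    simp only [Pi.sub_apply, Function.comp_apply, shiftFst, shiftSnd, Equiv.prodCongr_apply,
      Prod.map, Equiv.coe_addRight, Equiv.coe_refl, id]
    field_simp
  have hlap : h ^ 2 * (dLap M h v ⬝ᵥ v) = 2 * ((v ∘ shiftFst) ⬝ᵥ v) + 2 * ((v ∘ shiftSnd) ⬝ᵥ v)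
      - 4 * (v ⬝ᵥ v) := by
    rw [dLap_eq, smul_dotProduct, smul_eq_mul, ← mul_assoc, mul_inv_cancel₀ (pow_ne_zero 2 hh),
      one_mul]
    simp only [add_dotProduct, sub_dotProduct, smul_dotProduct, comp_equiv_symm_dotProduct,
      dotProduct_comm v (v ∘ _), smul_eq_mul]
    ring
  simp only [sub_dotProduct, dotProduct_sub, comp_equiv_dotProduct_comp_equiv,
    dotProduct_comm v (v ∘ _)] at hsum
  rw [gradE, hsum, hlap]
  ring

theorem gradE_nonneg (ε : ℝ) (v : GridFun M) : 0 ≤ gradE M h ε v := by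
  unfold gradE
  positivity

theorem dLap_one : dLap M h 1 = 0 := by
  funext p
  simp only [dLap_apply, Pi.one_apply, Pi.zero_apply]
  norm_num

theorem preservesNonneg_dLap_add : PreservesNonneg (dLap M h + (4 / h ^ 2) • 1) := fun v hv p => by
  have hsum := add_nonneg (add_nonneg (add_nonneg (hv (p.1 + 1, p.2)) (hv (p.1 - 1, p.2)))
    (hv (p.1, p.2 + 1))) (hv (p.1, p.2 - 1))
  simp only [add_apply, smul_apply, one_apply_eq_self, Pi.add_apply, Pi.smul_apply, smul_eq_mul,
    Pi.zero_apply, dLap_apply]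
  calc (0 : ℝ)
      ≤ (v (p.1 + 1, p.2) + v (p.1 - 1, p.2) + v (p.1, p.2 + 1) + v (p.1, p.2 - 1)) / h ^ 2 :=
        div_nonneg hsum (sq_nonneg h)
    _ = _ := by ring

theorem norm_dLap_apply_le (v : GridFun M) : ‖dLap M h v‖ ≤ 8 / h ^ 2 * ‖v‖ := by
  have hv := abs_apply_le_norm v
  refine pi_norm_le_iff_of_nonneg (by positivity) |>.2 fun p => ?_
  rw [Real.norm_eq_abs, dLap_apply, abs_div, abs_of_nonneg (sq_nonneg h), div_mul_eq_mul_div]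
  refine div_le_div_of_nonneg_right (abs_le.2 ⟨?_, ?_⟩) (sq_nonneg h)
  · linarith [abs_le.1 (hv (p.1 + 1, p.2)), abs_le.1 (hv (p.1 - 1, p.2)),
      abs_le.1 (hv (p.1, p.2 + 1)), abs_le.1 (hv (p.1, p.2 - 1)), abs_le.1 (hv p)]
  · linarith [abs_le.1 (hv (p.1 + 1, p.2)), abs_le.1 (hv (p.1 - 1, p.2)),
      abs_le.1 (hv (p.1, p.2 + 1)), abs_le.1 (hv (p.1, p.2 - 1)), abs_le.1 (hv p)]

end Laplacian

section Lkappa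

variable {M : ℕ} [NeZero M] {h ε κ g : ℝ}

theorem norm_exp_smul_dLap_apply_le {t : ℝ} (ht : 0 ≤ t) (v : GridFun M) :
    ‖NormedSpace.exp (t • dLap M h) v‖ ≤ ‖v‖ := by
  have hpos : PreservesNonneg (NormedSpace.exp (t • dLap M h)) :=
    PreservesNonneg.exp_of_add_smul_one (c := t * (4 / h ^ 2)) (by
      rw [mul_smul, ← smul_add]; exact preservesNonneg_dLap_add.smul ht)
  have hone : NormedSpace.exp (t • dLap M h) 1 = 1 := by
    rw [exp_apply_of_apply_eq_smul (c := 0) (by simp [dLap_one]), Real.exp_zero, one_smul]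
  exact hpos.norm_apply_le hone v

theorem Lkappa_isDotSymm : IsDotSymm (Lkappa M h ε κ g) :=
  (IsDotSymm.one.smul _).sub (dLap_isDotSymm.smul _)

theorem norm_exp_neg_smul_Lkappa_apply_le {s : ℝ} (hs : 0 ≤ s) (v : GridFun M) :
    ‖NormedSpace.exp (-(s • Lkappa M h ε κ g)) v‖ ≤ Real.exp (-(s * (κ * g))) * ‖v‖ := by
  have hsplit : -(s • Lkappa M h ε κ g) = (-(s * (κ * g))) • 1 + (s * ε ^ 2) • dLap M h := by
    rw [Lkappa, smul_sub, smul_smul, smul_smul, neg_sub, sub_eq_neg_add,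
      neg_smul (s * (κ * g)) (1 : GridFun M →L[ℝ] GridFun M)]
  rw [hsplit, exp_smul_one_add, smul_apply, norm_smul, Real.norm_of_nonneg (Real.exp_pos _).le]
  exact mul_le_mul_of_nonneg_left (norm_exp_smul_dLap_apply_le (by positivity) v)
    (Real.exp_pos _).le

theorem norm_phi1Op_Lkappa_apply_le {τ : ℝ} (hc : 0 < κ * g) (hτ : 0 ≤ τ) (v : GridFun M) :
    ‖phi1Op τ (Lkappa M h ε κ g) v‖ ≤ (1 - Real.exp (-(τ * (κ * g)))) / (κ * g) * ‖v‖ :=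
  norm_phi1Op_apply_le hc hτ (fun _ hs => norm_exp_neg_smul_Lkappa_apply_le hs) v

end Lkappa

section Scheme

variable {M : ℕ} [NeZero M] {h ε κ τ : ℝ} {f F σ : ℝ → ℝ}

theorem EI1step_fst (us : GridFun M × ℝ) :
    (EI1step M h ε κ τ f F σ us).1 =
      NormedSpace.exp (-(τ • Lkappa M h ε κ (gFun M h F σ us.1 us.2))) us.1 +
        phi1Op τ (Lkappa M h ε κ (gFun M h F σ us.1 us.2))
          (Nkappa M h κ (gFun M h F σ us.1 us.2) f F σ us.1 us.2) :=
  rfl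

theorem EI1step_snd (us : GridFun M × ℝ) :
    (EI1step M h ε κ τ f F σ us).2 = us.2 -
      gFun M h F σ us.1 us.2 * (h ^ 2 * ((f ∘ us.1) ⬝ᵥ ((EI1step M h ε κ τ f F σ us).1 - us.1))) :=
  rfl

theorem EI1step_fst_sub (us : GridFun M × ℝ) :
    (EI1step M h ε κ τ f F σ us).1 - us.1 =
      phi1Op τ (Lkappa M h ε κ (gFun M h F σ us.1 us.2))
        (gFun M h F σ us.1 us.2 • (f ∘ us.1) + ε ^ 2 • dLap M h us.1) := by
  set g := gFun M h F σ us.1 us.2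
  set L := Lkappa M h ε κ g
  have hN : Nkappa M h κ g f F σ us.1 us.2 = L us.1 + (g • (f ∘ us.1) + ε ^ 2 • dLap M h us.1) := by
    funext p
    simp only [Nkappa, L, Lkappa, sub_apply, smul_apply, one_apply_eq_self, Pi.add_apply,
      Pi.sub_apply, Pi.smul_apply, smul_eq_mul, Function.comp_apply, g]
    ring
  rw [EI1step_fst, hN, map_add, phi1Op_apply_apply_self]
  abel

theorem modE_EI1step_sub (hh : h ≠ 0) (us : GridFun M × ℝ) :
    let g := gFun M h F σ us.1 us.2
    let L := Lkappa M h ε κ g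
    let w := g • (f ∘ us.1) + ε ^ 2 • dLap M h us.1
    let δ := phi1Op τ L w
    modE M h ε (EI1step M h ε κ τ f F σ us).1 (EI1step M h ε κ τ f F σ us).2 -
        modE M h ε us.1 us.2 =
      -(h ^ 2 / 2 * (δ ⬝ᵥ w + NormedSpace.exp (-(τ • L)) δ ⬝ᵥ w + κ * g * (δ ⬝ᵥ δ))) := by
  intro g L w δ
  have hδ : (EI1step M h ε κ τ f F σ us).1 = us.1 + δ := by
    rw [← sub_eq_iff_eq_add']
    exact EI1step_fst_sub us
  have hs : (EI1step M h ε κ τ f F σ us).2 = us.2 - g * (h ^ 2 * ((f ∘ us.1) ⬝ᵥ δ)) := by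
    rw [EI1step_snd, hδ, add_sub_cancel_left]
  have hgrad : dLap M h (us.1 + δ) ⬝ᵥ (us.1 + δ) =
      dLap M h us.1 ⬝ᵥ us.1 + 2 * (dLap M h us.1 ⬝ᵥ δ) + dLap M h δ ⬝ᵥ δ := by
    rw [map_add, add_dotProduct, dotProduct_add, dotProduct_add, dLap_isDotSymm δ us.1,
      dotProduct_comm δ]
    ring
  have hw : w ⬝ᵥ δ = g * ((f ∘ us.1) ⬝ᵥ δ) + ε ^ 2 * (dLap M h us.1 ⬝ᵥ δ) := by
    simp only [w, add_dotProduct, smul_dotProduct, smul_eq_mul]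
  have hLδ : L δ ⬝ᵥ δ = κ * g * (δ ⬝ᵥ δ) - ε ^ 2 * (dLap M h δ ⬝ᵥ δ) := by
    simp only [L, Lkappa, sub_apply, smul_apply, one_apply_eq_self, sub_dotProduct, smul_dotProduct,
      smul_eq_mul]
  -- `⟨Lδ, δ⟩ = ⟨φ (Lδ), w⟩` by symmetry of `φ`, and `φ L = 1 - e^{-τL}`
  have hLδ' : L δ ⬝ᵥ δ = δ ⬝ᵥ w - NormedSpace.exp (-(τ • L)) δ ⬝ᵥ w := by
    rw [← sub_dotProduct, ← phi1Op_apply_apply_self, Lkappa_isDotSymm.phi1Op τ]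
  simp only [modE]
  rw [hδ, hs, gradE_eq_neg_dLap_dotProduct hh, gradE_eq_neg_dLap_dotProduct hh, hgrad]
  linear_combination (h ^ 2) * hw + (h ^ 2 / 2) * hLδ' - (h ^ 2 / 2) * hLδ
    + h ^ 2 * dotProduct_comm δ w

theorem modE_EI1step_le (hh : h ≠ 0) (hτ : 0 ≤ τ) (us : GridFun M × ℝ)
    (hκg : 0 ≤ κ * gFun M h F σ us.1 us.2) :
    modE M h ε (EI1step M h ε κ τ f F σ us).1 (EI1step M h ε κ τ f F σ us).2 ≤
      modE M h ε us.1 us.2 := by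
  have hsub := modE_EI1step_sub (ε := ε) (κ := κ) (τ := τ) (f := f) (F := F) (σ := σ) hh us
  dsimp only at hsub
  set L := Lkappa M h ε κ (gFun M h F σ us.1 us.2)
  set w := gFun M h F σ us.1 us.2 • (f ∘ us.1) + ε ^ 2 • dLap M h us.1
  have hA : 0 ≤ phi1Op τ L w ⬝ᵥ w := by
    simpa using Lkappa_isDotSymm.dotProduct_phi1Op_exp_apply_self_nonneg hτ 0 w
  have hEA : 0 ≤ NormedSpace.exp (-(τ • L)) (phi1Op τ L w) ⬝ᵥ w := by
    -- by the two symmetries, `⟨e^{-τL} φ w, w⟩ = ⟨φ e^{-τL} w, w⟩`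
    rw [← neg_smul τ L, (Lkappa_isDotSymm.smul (-τ)).exp, dotProduct_comm,
      ← Lkappa_isDotSymm.phi1Op τ, neg_smul τ L]
    exact Lkappa_isDotSymm.dotProduct_phi1Op_exp_apply_self_nonneg hτ τ w
  have hAA : 0 ≤ κ * gFun M h F σ us.1 us.2 * (phi1Op τ L w ⬝ᵥ phi1Op τ L w) :=
    mul_nonneg hκg (Fintype.sum_nonneg fun _ => mul_self_nonneg _)
  have hh2 : 0 ≤ h ^ 2 / 2 := by positivity
  nlinarith

theorem norm_EI1step_fst_le {β : ℝ} (hκ : 0 < κ) (hτ : 0 ≤ τ) (us : GridFun M × ℝ)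
    (hg : 0 < gFun M h F σ us.1 us.2) (hfκ : ∀ ξ ∈ Set.Icc (-β) β, |f ξ + κ * ξ| ≤ κ * β)
    (hu : ‖us.1‖ ≤ β) : ‖(EI1step M h ε κ τ f F σ us).1‖ ≤ β := by
  set g := gFun M h F σ us.1 us.2
  have hc : 0 < κ * g := mul_pos hκ hg
  have hN : ‖Nkappa M h κ g f F σ us.1 us.2‖ ≤ κ * g * β := by
    refine pi_norm_le_iff_of_nonneg (by nlinarith [(norm_nonneg _).trans hu]) |>.2 fun p => ?_
    have hp : us.1 p ∈ Set.Icc (-β) β := abs_le.1 ((abs_apply_le_norm us.1 p).trans hu)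
    have hNp : Nkappa M h κ g f F σ us.1 us.2 p = g * (f (us.1 p) + κ * us.1 p) := by
      simp only [Nkappa, g]; ring
    rw [Real.norm_eq_abs, hNp, abs_mul, abs_of_pos hg]
    exact (mul_le_mul_of_nonneg_left (hfκ _ hp) hg.le).trans_eq (by ring)
  have hdecay : Real.exp (-(τ * (κ * g))) ≤ 1 := Real.exp_le_one_iff.2 (by nlinarith)
  have hE : ‖NormedSpace.exp (-(τ • Lkappa M h ε κ g)) us.1‖ ≤ Real.exp (-(τ * (κ * g))) * β :=
    (norm_exp_neg_smul_Lkappa_apply_le hτ us.1).trans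
      (mul_le_mul_of_nonneg_left hu (Real.exp_pos _).le)
  have hA := (norm_phi1Op_Lkappa_apply_le (h := h) (ε := ε) hc hτ
    (Nkappa M h κ g f F σ us.1 us.2)).trans
      (mul_le_mul_of_nonneg_left hN (div_nonneg (sub_nonneg.2 hdecay) hc.le))
  rw [EI1step_fst]
  calc _ ≤ _ := norm_add_le _ _
    _ ≤ _ := add_le_add hE hA
    _ = β := by field_simp; ring

theorem norm_EI1step_fst_sub_le (hκ : 0 < κ) (hτ : 0 ≤ τ) (us : GridFun M × ℝ)
    (hg : 0 < gFun M h F σ us.1 us.2) :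
    ‖(EI1step M h ε κ τ f F σ us).1 - us.1‖ ≤
      τ * ‖gFun M h F σ us.1 us.2 • (f ∘ us.1) + ε ^ 2 • dLap M h us.1‖ := by
  have hc := mul_pos hκ hg
  rw [EI1step_fst_sub]
  refine (norm_phi1Op_Lkappa_apply_le hc hτ _).trans ?_
  gcongr
  rw [div_le_iff₀ hc]
  linarith [Real.add_one_le_exp (-(τ * (κ * gFun M h F σ us.1 us.2)))]

theorem abs_EI1step_snd_sub_le (us : GridFun M × ℝ) :
    |(EI1step M h ε κ τ f F σ us).2 - us.2| ≤ |gFun M h F σ us.1 us.2| *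
      (h ^ 2 * ((M : ℝ) ^ 2 * (‖f ∘ us.1‖ * ‖(EI1step M h ε κ τ f F σ us).1 - us.1‖))) := by
  rw [EI1step_snd, sub_sub_cancel_left, abs_neg, abs_mul, abs_mul, abs_of_nonneg (sq_nonneg h)]
  gcongr
  simpa [sq] using abs_dotProduct_le (f ∘ us.1) ((EI1step M h ε κ τ f F σ us).1 - us.1)

end Scheme

section Iterates

variable {M : ℕ} [NeZero M] {h ε κ β : ℝ} {f F σ : ℝ → ℝ} {uinit : GridFun M}

theorem norm_EI1_fst_le_and_modE_EI1_le {τ : ℝ} (hh : h ≠ 0) (hκ : 0 < κ) (hτ : 0 ≤ τ)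
    (hσpos : ∀ x, 0 < σ x) (hfκ : ∀ ξ ∈ Set.Icc (-β) β, |f ξ + κ * ξ| ≤ κ * β)
    (hinit : ‖uinit‖ ≤ β) (n : ℕ) :
    ‖(EI1 M h ε κ τ f F σ uinit n).1‖ ≤ β ∧
      modE M h ε (EI1 M h ε κ τ f F σ uinit n).1 (EI1 M h ε κ τ f F σ uinit n).2 ≤
        Eh M h ε F uinit := by
  induction n with
  | zero => exact ⟨hinit, le_rfl⟩
  | succ n ih =>
    have hg : 0 < gFun M h F σ (EI1 M h ε κ τ f F σ uinit n).1 (EI1 M h ε κ τ f F σ uinit n).2 :=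
      div_pos (hσpos _) (hσpos _)
    exact ⟨norm_EI1step_fst_le hκ hτ _ hg hfκ ih.1,
      (modE_EI1step_le hh hτ _ (mul_pos hκ hg).le).trans ih.2⟩

theorem abs_EI1step_snd_sub_le_of_bounds {τ Gu Cf : ℝ} (hκ : 0 < κ) (hτ : 0 ≤ τ)
    (hCf : ∀ ξ ∈ Set.Icc (-β) β, |f ξ| ≤ Cf) (us : GridFun M × ℝ) (hu : ‖us.1‖ ≤ β)
    (hg : 0 < gFun M h F σ us.1 us.2) (hGu : gFun M h F σ us.1 us.2 ≤ Gu) :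
    |(EI1step M h ε κ τ f F σ us).2 - us.2| ≤
      τ * (Gu * (h ^ 2 * ((M : ℝ) ^ 2 * (Cf * (Gu * Cf + ε ^ 2 * (8 / h ^ 2 * β)))))) := by
  have hβ : 0 ≤ β := (norm_nonneg _).trans hu
  have hGu0 : 0 ≤ Gu := hg.le.trans hGu
  have hCf0 : 0 ≤ Cf := (abs_nonneg _).trans (hCf 0 ⟨by linarith, hβ⟩)
  have hf : ‖f ∘ us.1‖ ≤ Cf := pi_norm_le_iff_of_nonneg hCf0 |>.2 fun p =>
    hCf _ (abs_le.1 ((abs_apply_le_norm us.1 p).trans hu))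
  have hw : ‖gFun M h F σ us.1 us.2 • (f ∘ us.1) + ε ^ 2 • dLap M h us.1‖ ≤
      Gu * Cf + ε ^ 2 * (8 / h ^ 2 * β) := by
    refine (norm_add_le _ _).trans (add_le_add ?_ ?_)
    · rw [norm_smul, Real.norm_of_nonneg hg.le]
      exact mul_le_mul hGu hf (norm_nonneg _) (hg.le.trans hGu)
    · rw [norm_smul, Real.norm_of_nonneg (sq_nonneg ε)]
      exact mul_le_mul_of_nonneg_left ((norm_dLap_apply_le _).trans (by gcongr)) (sq_nonneg ε)
  have hδ := (norm_EI1step_fst_sub_le hκ hτ us hg).trans (mul_le_mul_of_nonneg_left hw hτ)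
  refine (abs_EI1step_snd_sub_le us).trans ?_
  rw [abs_of_pos hg]
  calc _ ≤ Gu * (h ^ 2 * ((M : ℝ) ^ 2 * (Cf * (τ * (Gu * Cf + ε ^ 2 * (8 / h ^ 2 * β)))))) := by
        gcongr
    _ = _ := by ring

theorem exists_EI1_snd_ge {Gu : ℝ} (hκ : 0 < κ) (hσpos : ∀ x, 0 < σ x) (hf : Continuous f)
    (hbdd : ∀ τ, 0 < τ → ∀ n, ‖(EI1 M h ε κ τ f F σ uinit n).1‖ ≤ β ∧
      gFun M h F σ (EI1 M h ε κ τ f F σ uinit n).1 (EI1 M h ε κ τ f F σ uinit n).2 ≤ Gu) :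
    ∃ C, 0 ≤ C ∧ ∀ τ, 0 < τ → ∀ n : ℕ,
      E1h M h F uinit - n * τ * C ≤ (EI1 M h ε κ τ f F σ uinit n).2 := by
  obtain ⟨Cf, hCf⟩ :=
    isCompact_Icc.exists_bound_of_continuousOn (hf.continuousOn (s := Set.Icc (-β) β))
  have hβ : 0 ≤ β := (norm_nonneg _).trans (hbdd 1 one_pos 0).1
  have hGu0 : 0 ≤ Gu := (div_pos (hσpos _) (hσpos _)).le.trans (hbdd 1 one_pos 0).2
  have hCf0 : 0 ≤ Cf := (norm_nonneg _).trans (hCf 0 ⟨by linarith, hβ⟩)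
  set C := Gu * (h ^ 2 * ((M : ℝ) ^ 2 * (Cf * (Gu * Cf + ε ^ 2 * (8 / h ^ 2 * β)))))
  refine ⟨C, by positivity, fun τ hτ n => ?_⟩
  have hstep : ∀ m : ℕ, (EI1 M h ε κ τ f F σ uinit m).2 - τ * C ≤
      (EI1 M h ε κ τ f F σ uinit (m + 1)).2 := fun m => by
    have : |(EI1 M h ε κ τ f F σ uinit (m + 1)).2 - (EI1 M h ε κ τ f F σ uinit m).2| ≤ τ * C :=
      abs_EI1step_snd_sub_le_of_bounds hκ hτ.le (fun ξ hξ => by simpa using hCf ξ hξ) _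
        (hbdd τ hτ m).1 (div_pos (hσpos _) (hσpos _)) (hbdd τ hτ m).2
    linarith [(abs_le.1 this).1]
  have hmono := monotone_nat_of_le_succ
    (f := fun m : ℕ => (EI1 M h ε κ τ f F σ uinit m).2 + m * (τ * C))
    (fun m => by push_cast; linarith [hstep m]) (Nat.zero_le n)
  simp only [CharP.cast_eq_zero, zero_mul, add_zero] at hmono
  have h0 : (EI1 M h ε κ τ f F σ uinit 0).2 = E1h M h F uinit := rfl
  linarith

end Iterates

theorem stmt_8_general (M : ℕ) [NeZero M] (L h ε : ℝ) (hL : 0 < L) (hh : h = L / M)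
    (f F σ : ℝ → ℝ) (hF : ∀ x, HasDerivAt F (-f x) x)
    (hσ : ContDiff ℝ 1 σ) (hσpos : ∀ x, 0 < σ x) (hσmono : ∀ x, 0 ≤ deriv σ x)
    (κ : ℝ) (hκ : 0 < κ) (hf : ContDiff ℝ 1 f)
    (β : ℝ) (hfβ : f β ≤ 0) (hfβ' : 0 ≤ f (-β))
    (hκf : ∀ ξ ∈ Set.Icc (-β) β, |deriv f ξ| ≤ κ)
    (uinit : GridFun M) (hinit : ‖uinit‖ ≤ β) (T : ℝ) (hT : 0 < T) :
    ∃ Gl Gu : ℝ, 0 < Gl ∧ 0 < Gu ∧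
      ∀ τ : ℝ, 0 < τ → ∀ n : ℕ, n ≤ Nat.floor (T / τ) →
        Gl ≤ gFun M h F σ (EI1 M h ε κ τ f F σ uinit n).1 (EI1 M h ε κ τ f F σ uinit n).2 ∧
        gFun M h F σ (EI1 M h ε κ τ f F σ uinit n).1 (EI1 M h ε κ τ f F σ uinit n).2 ≤ Gu := by
  have hh0 : h ≠ 0 := by rw [hh]; exact (div_pos hL (Nat.cast_pos.2 (NeZero.pos M))).ne'
  have hσm : Monotone σ := monotone_of_deriv_nonneg (hσ.differentiable one_ne_zero) hσmono
  have hfκ := abs_add_mul_le_of_abs_deriv_le (hf.differentiable one_ne_zero) hfβ hfβ' hκf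
  have hFc : Continuous F := continuous_iff_continuousAt.2 fun x => (hF x).continuousAt
  obtain ⟨a, b, ha, hab⟩ := exists_pos_bounds_on_closedBall
    (hσ.continuous.comp (by unfold E1h; fun_prop : Continuous (E1h M h F))) (fun _ => hσpos _)
    ((norm_nonneg _).trans hinit)
  have hbdd := fun τ (hτ : 0 < τ) n =>
    norm_EI1_fst_le_and_modE_EI1_le (ε := ε) (F := F) hh0 hκ hτ.le hσpos hfκ hinit n
  have hs_le : ∀ τ, 0 < τ → ∀ n, (EI1 M h ε κ τ f F σ uinit n).2 ≤ Eh M h ε F uinit :=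
    fun τ hτ n => (le_add_of_nonneg_left (gradE_nonneg ε _)).trans (hbdd τ hτ n).2
  have hGu : ∀ τ, 0 < τ → ∀ n,
      gFun M h F σ (EI1 M h ε κ τ f F σ uinit n).1 (EI1 M h ε κ τ f F σ uinit n).2 ≤
        σ (Eh M h ε F uinit) / a :=
    fun τ hτ n => div_le_div₀ (hσpos _).le (hσm (hs_le τ hτ n)) ha (hab _ (hbdd τ hτ n).1).1
  obtain ⟨C, hC0, hC⟩ := exists_EI1_snd_ge hκ hσpos hf.continuous
    fun τ hτ n => ⟨(hbdd τ hτ n).1, hGu τ hτ n⟩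
  refine ⟨σ (E1h M h F uinit - T * C) / b, σ (Eh M h ε F uinit) / a,
    div_pos (hσpos _) (ha.trans_le ((hab _ hinit).1.trans (hab _ hinit).2)), div_pos (hσpos _) ha,
    fun τ hτ n hn => ⟨?_, hGu τ hτ n⟩⟩
  have hnτ : n * τ ≤ T := by
    have := (Nat.cast_le.2 hn).trans (Nat.floor_le (div_nonneg hT.le hτ.le))
    rwa [le_div_iff₀ hτ] at this
  have hs_ge : E1h M h F uinit - T * C ≤ (EI1 M h ε κ τ f F σ uinit n).2 :=
    le_trans (by nlinarith) (hC τ hτ n)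
  exact div_le_div₀ (hσpos _).le (hσm hs_ge) (hσpos _) (hab _ (hbdd τ hτ n).1).2

/-- Uniform bounds on `g(uⁿ, sⁿ)` for GSAV-EI1: there exist `G_* > 0` and `G^* > 0`, independent
of `τ`, such that `G_* ≤ g(uⁿ,sⁿ) ≤ G^*` for every `τ > 0` and `0 ≤ n ≤ ⌊T/τ⌋`. -/
theorem stmt_8 (M : ℕ) [NeZero M] (L h ε : ℝ) (hL : 0 < L) (hh : h = L / M) (hε : 0 < ε)
    (f F σ : ℝ → ℝ) (hF : ∀ x, HasDerivAt F (-f x) x)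
    (hσ : ContDiff ℝ 1 σ) (hσpos : ∀ x, 0 < σ x) (hσmono : ∀ x, 0 ≤ deriv σ x)
    (κ : ℝ) (hκ : 0 < κ) (hf : ContDiff ℝ 1 f)
    (β : ℝ) (hβ : 0 < β) (hfβ : f β ≤ 0) (hfβ' : 0 ≤ f (-β))
    (hκf : ∀ ξ ∈ Set.Icc (-β) β, |deriv f ξ| ≤ κ)
    (uinit : GridFun M) (hinit : ‖uinit‖ ≤ β) (T : ℝ) (hT : 0 < T) :
    ∃ Gl Gu : ℝ, 0 < Gl ∧ 0 < Gu ∧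
      ∀ τ : ℝ, 0 < τ → ∀ n : ℕ, n ≤ Nat.floor (T / τ) →
        Gl ≤ gFun M h F σ (EI1 M h ε κ τ f F σ uinit n).1 (EI1 M h ε κ τ f F σ uinit n).2 ∧
        gFun M h F σ (EI1 M h ε κ τ f F σ uinit n).1 (EI1 M h ε κ τ f F σ uinit n).2 ≤ Gu :=
  stmt_8_general M L h ε hL hh f F σ hF hσ hσpos hσmono κ hκ hf β hfβ hfβ' hκf uinit hinit T hT
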